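/- Let σ and β be purely imaginary complex numbers. Then exp( ∫₀^1 (σ + tβ) · β · ( Γ′(1+σ+tβ)/Γ(1+σ+tβ) + Γ′(1−σ−tβ)/Γ(1−σ−tβ) ) dt ) = exp( β² + 2βσ ) · ( G(1+σ+β) G(1−σ−β) ) / ( G(1+σ) G(1−σ) ). (The left-hand side is the exponential of the integral I(β;σ) = ∫₀^β (σ+x) ∂_x log( Γ(1+σ+x)/Γ(1−σ−x) ) dx taken along the straight segment from 0 to β in the imaginary axis.) -/

import Mathlib

/-- Barnes' G-function `G(1+z)`, via its Weierstrass product. -/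
noncomputable def barnesG1 (z : ℂ) : ℂ :=
  (2 * Real.pi : ℂ) ^ (z / 2) *
    Complex.exp (-(z + (1 + Real.eulerMascheroniConstant) * z ^ 2) / 2) *
    ∏' k : ℕ, ((1 + z / (k + 1)) ^ (k + 1) * Complex.exp (z ^ 2 / (2 * (k + 1)) - z))

open Complex Filter Finset Topology

namespace BG
noncomputable section

local notation "γ" => Real.eulerMascheroniConstant

lemma mc_ne (k : ℕ) : ((k:ℂ)+1) ≠ 0 := by
  intro h
  have := congrArg Complex.re h
  simp at this
  nlinarith [Nat.cast_nonneg (α := ℝ) k]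

lemma norm_mc (k : ℕ) : ‖((k:ℂ)+1)‖ = (k:ℝ)+1 := by
  rw [show ((k:ℂ)+1) = ((((k:ℝ)+1) : ℝ) : ℂ) by push_cast; ring]
  rw [Complex.norm_real, Real.norm_eq_abs, abs_of_pos (by positivity)]

lemma summable_inv_sq : Summable (fun k : ℕ => 1/((k:ℝ)+1)^2) := by
  have h : Summable (fun n : ℕ => 1/(n:ℝ)^2) :=
    Real.summable_one_div_nat_pow.mpr one_lt_two
  have := (summable_nat_add_iff 1).mpr h
  refine this.congr fun n => ?_
  push_cast
  ring_nf

lemma summable_inv_cube : Summable (fun k : ℕ => 1/((k:ℝ)+1)^3) := by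
  have h : Summable (fun n : ℕ => 1/(n:ℝ)^3) :=
    Real.summable_one_div_nat_pow.mpr (by norm_num)
  have := (summable_nat_add_iff 1).mpr h
  refine this.congr fun n => ?_
  push_cast
  ring_nf

/-- key lower bound on `‖(k+1)+z‖` -/
lemma key_bound {z : ℂ} (hre : -(1/4:ℝ) ≤ z.re) (k : ℕ) :
    ((k:ℝ)+1) ≤ 2*(‖z‖+1) * ‖((k:ℂ)+1)+z‖ := by
  set r := ‖z‖ with hr
  have hr0 : 0 ≤ r := norm_nonneg z
  set M := ‖((k:ℂ)+1)+z‖ with hM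
  have hre' : (((k:ℂ)+1)+z).re = (k:ℝ)+1+z.re := by simp
  have h1 : (3/4:ℝ) ≤ M := by
    have : (((k:ℂ)+1)+z).re ≤ M := Complex.re_le_norm _
    rw [hre'] at this
    have hk : (0:ℝ) ≤ k := Nat.cast_nonneg k
    linarith
  have h2 : (k:ℝ)+1 - r ≤ M := by
    have := norm_sub_norm_le ((k:ℂ)+1) (-z)
    simp only [sub_neg_eq_add, norm_neg] at this
    rw [norm_mc] at this
    linarith
  rcases le_or_gt ((k:ℝ)+1) ((3/2)*(r+1)) with h | h
  · nlinarith
  · nlinarith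


/-! ### series terms -/

def f (k : ℕ) (z : ℂ) : ℂ := z/((k:ℂ)+1) - Complex.log (1 + z/((k:ℂ)+1))
def fd (k : ℕ) (z : ℂ) : ℂ := z/(((k:ℂ)+1)*(((k:ℂ)+1)+z))
def B (k : ℕ) (z : ℂ) : ℂ :=
  ((k:ℂ)+1) * Complex.log (1 + z/((k:ℂ)+1)) + z^2/(2*((k:ℂ)+1)) - z
def A (k : ℕ) (z : ℂ) : ℂ := B k z + B k (-z)

lemma A_eq (k : ℕ) (z : ℂ) : A k z = z^2/((k:ℂ)+1) +
    ((k:ℂ)+1) * (Complex.log (1 + z/((k:ℂ)+1)) + Complex.log (1 - z/((k:ℂ)+1))) := by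
  unfold A B
  rw [show 1 + -z/((k:ℂ)+1) = 1 - z/((k:ℂ)+1) by ring]
  field_simp [mc_ne k]
  ring

lemma re_div (k : ℕ) (z : ℂ) : (z / ((k:ℂ)+1)).re = z.re / ((k:ℝ)+1) := by
  rw [show ((k:ℂ)+1) = ((((k:ℝ)+1):ℝ):ℂ) by push_cast; ring, Complex.div_ofReal_re]

lemma kR_pos (k : ℕ) : (0:ℝ) < (k:ℝ)+1 := by positivity

lemma kR_ge_one (k : ℕ) : (1:ℝ) ≤ (k:ℝ)+1 := by
  nlinarith [Nat.cast_nonneg (α := ℝ) k]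

lemma re_one_add (k : ℕ) {z : ℂ} (h : -(1/2:ℝ) < z.re) :
    (1/2:ℝ) < (1 + z/((k:ℂ)+1)).re := by
  have h1 : (1 + z/((k:ℂ)+1)).re = 1 + z.re/((k:ℝ)+1) := by
    simp [re_div]
  rw [h1]
  have hk := kR_ge_one k
  have : -(1/2:ℝ) < z.re/((k:ℝ)+1) := by
    rw [lt_div_iff₀ (kR_pos k)]
    nlinarith
  linarith

lemma slit1 (k : ℕ) {z : ℂ} (h : -(1/2:ℝ) < z.re) :
    (1 + z/((k:ℂ)+1)) ∈ Complex.slitPlane :=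
  Complex.mem_slitPlane_iff.mpr (Or.inl (by have := re_one_add k h; linarith))

lemma one_add_ne (k : ℕ) {z : ℂ} (h : -(1/2:ℝ) < z.re) : (1 + z/((k:ℂ)+1)) ≠ 0 :=
  Complex.slitPlane_ne_zero (slit1 k h)

lemma madd_ne (k : ℕ) {z : ℂ} (h : -(1/2:ℝ) < z.re) : ((k:ℂ)+1)+z ≠ 0 := by
  intro hc
  have := congrArg Complex.re hc
  simp at this
  have := kR_ge_one k
  linarith

lemma madd_norm_pos (k : ℕ) {z : ℂ} (h : -(1/2:ℝ) < z.re) : 0 < ‖((k:ℂ)+1)+z‖ :=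
  norm_pos_iff.mpr (madd_ne k h)

lemma hasDerivAt_f (k : ℕ) {z : ℂ} (h : -(1/2:ℝ) < z.re) :
    HasDerivAt (f k) (fd k z) z := by
  have hd : HasDerivAt (fun z : ℂ => 1 + z/((k:ℂ)+1)) (1/((k:ℂ)+1)) z := by
    simpa using ((hasDerivAt_id z).div_const ((k:ℂ)+1)).const_add 1
  have hlog := hd.clog (slit1 k h)
  have htot := ((hasDerivAt_id z).div_const ((k:ℂ)+1)).sub hlog
  refine htot.congr_deriv (Eq.symm ?_)
  rw [fd]
  field_simp [one_add_ne k h, madd_ne k h, mc_ne k]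
  ring

lemma fd_bound {z₀ : ℂ} (h0 : z₀.re = 0) {z : ℂ} (hz : z ∈ Metric.ball z₀ (1/4)) (k : ℕ) :
    ‖fd k z‖ ≤ (‖z₀‖+1/4) * (2*((‖z₀‖+1/4)+1)) * (1/((k:ℝ)+1)^2) := by
  have hd : ‖z - z₀‖ < 1/4 := by
    rw [Metric.mem_ball, Complex.dist_eq] at hz; exact hz
  have hre : -(1/4:ℝ) ≤ z.re := by
    have h1 : |z.re - z₀.re| ≤ ‖z - z₀‖ := by
      simpa using Complex.abs_re_le_norm (z - z₀)
    rw [h0, sub_zero] at h1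
    have := abs_le.mp (le_of_lt (lt_of_le_of_lt h1 hd))
    linarith [this.1]
  have hzR : ‖z‖ ≤ ‖z₀‖ + 1/4 := by
    calc ‖z‖ = ‖z₀ + (z - z₀)‖ := by ring_nf
    _ ≤ ‖z₀‖ + ‖z - z₀‖ := norm_add_le _ _
    _ ≤ ‖z₀‖ + 1/4 := by linarith
  have hkey := key_bound (by linarith : -(1/4:ℝ) ≤ z.re) k
  have hre2 : -(1/2:ℝ) < z.re := by linarith
  have hMpos := madd_norm_pos k hre2
  rw [fd, norm_div, norm_mul, norm_mc]
  rw [div_le_iff₀ (by positivity)]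
  have hz0 : 0 ≤ ‖z₀‖ := norm_nonneg _
  have hk1 := kR_ge_one k
  have hA : ((k:ℝ)+1) ≤ 2*((‖z₀‖+1/4)+1) * ‖((k:ℂ)+1)+z‖ := by
    nlinarith [norm_nonneg z]
  have h5 : ‖z‖ * ((k:ℝ)+1) ≤ (‖z₀‖+1/4) * (2*((‖z₀‖+1/4)+1) * ‖((k:ℂ)+1)+z‖) :=
    mul_le_mul hzR hA (by positivity) (by positivity)
  have hexp : (‖z₀‖+1/4) * (2*((‖z₀‖+1/4)+1)) * (1/((k:ℝ)+1)^2) * (((k:ℝ)+1) * ‖((k:ℂ)+1)+z‖)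
      = (‖z₀‖+1/4) * (2*((‖z₀‖+1/4)+1) * ‖((k:ℂ)+1)+z‖) / ((k:ℝ)+1) := by
    field_simp
  rw [hexp, le_div_iff₀ (kR_pos k)]
  nlinarith

/-! ### summability -/

lemma summable_of_tail_bound (g : ℕ → ℂ) (C : ℝ) (N : ℕ)
    (h : ∀ k, N ≤ k → ‖g k‖ ≤ C * (1/((k:ℝ)+1)^2)) : Summable g := by
  rw [← summable_nat_add_iff N]
  apply Summable.of_norm
  have hs : Summable (fun k : ℕ => C * (1/(((k+N:ℕ):ℝ)+1)^2)) :=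
    (summable_nat_add_iff N).mpr (summable_inv_sq.mul_left C)
  exact hs.of_nonneg_of_le (fun k => norm_nonneg _) (fun k => h (k+N) (by omega))

lemma norm_u (k : ℕ) (z : ℂ) : ‖z/((k:ℂ)+1)‖ = ‖z‖/((k:ℝ)+1) := by
  rw [norm_div, norm_mc]

lemma logTaylor_two (u : ℂ) : Complex.logTaylor 2 u = u := by
  simp [show (2:ℕ) = 0+1+1 by rfl, Complex.logTaylor_succ, Complex.logTaylor_zero]

lemma logTaylor_three (u : ℂ) : Complex.logTaylor 3 u = u - u^2/2 := by
  simp [show (3:ℕ) = 0+1+1+1 by rfl, Complex.logTaylor_succ, Complex.logTaylor_zero]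
  ring

lemma u_small {k : ℕ} {z : ℂ} (hk : 2*‖z‖ ≤ (k:ℝ)) :
    ‖z/((k:ℂ)+1)‖ ≤ 1/2 := by
  rw [norm_u, div_le_iff₀ (kR_pos k)]
  nlinarith [norm_nonneg z, kR_ge_one k]

lemma tail_bound_f {k : ℕ} {z : ℂ} (hk : 2*‖z‖ ≤ (k:ℝ)) :
    ‖f k z‖ ≤ ‖z‖^2 * (1/((k:ℝ)+1)^2) := by
  have hsm := u_small hk
  have hlt : ‖z/((k:ℂ)+1)‖ < 1 := lt_of_le_of_lt hsm (by norm_num)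
  have hb := Complex.norm_log_sub_logTaylor_le 1 hlt
  rw [logTaylor_two] at hb
  have h1 : f k z = -(Complex.log (1 + z/((k:ℂ)+1)) - z/((k:ℂ)+1)) := by
    rw [f]; ring
  rw [h1, norm_neg]
  have h2 : (1 - ‖z/((k:ℂ)+1)‖)⁻¹ ≤ 2 := by
    rw [inv_le_comm₀ (by linarith) (by norm_num)]
    linarith
  have h3 : ‖z/((k:ℂ)+1)‖^2 ≤ ‖z‖^2 * (1/((k:ℝ)+1)^2) := by
    rw [norm_u, div_pow]
    rw [div_eq_mul_one_div]
  norm_num only at hb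
  calc ‖Complex.log (1 + z/((k:ℂ)+1)) - z/((k:ℂ)+1)‖
      ≤ ‖z/((k:ℂ)+1)‖ ^ 2 * (1 - ‖z/((k:ℂ)+1)‖)⁻¹ / 2 := hb
    _ ≤ ‖z/((k:ℂ)+1)‖ ^ 2 * 2 / 2 := by
        apply div_le_div_of_nonneg_right ?_ (by norm_num)
        exact mul_le_mul_of_nonneg_left h2 (by positivity)
    _ = ‖z/((k:ℂ)+1)‖ ^ 2 := by ring
    _ ≤ ‖z‖^2 * (1/((k:ℝ)+1)^2) := h3

lemma summable_f (z : ℂ) : Summable (fun k => f k z) := by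
  obtain ⟨N, hN⟩ := exists_nat_ge (2*‖z‖)
  apply summable_of_tail_bound _ (‖z‖^2) N
  intro k hk
  exact tail_bound_f (le_trans hN (by exact_mod_cast Nat.cast_le.mpr hk))

lemma B_eq_taylor (k : ℕ) (z : ℂ) : B k z =
    ((k:ℂ)+1) * (Complex.log (1 + z/((k:ℂ)+1)) - Complex.logTaylor 3 (z/((k:ℂ)+1))) := by
  rw [B, logTaylor_three]
  field_simp [mc_ne k]
  ring

lemma tail_bound_B {k : ℕ} {z : ℂ} (hk : 2*‖z‖ ≤ (k:ℝ)) :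
    ‖B k z‖ ≤ (‖z‖^3) * (1/((k:ℝ)+1)^2) := by
  have hsm := u_small hk
  have hlt : ‖z/((k:ℂ)+1)‖ < 1 := lt_of_le_of_lt hsm (by norm_num)
  have hb := Complex.norm_log_sub_logTaylor_le 2 hlt
  have h2 : (1 - ‖z/((k:ℂ)+1)‖)⁻¹ ≤ 2 := by
    rw [inv_le_comm₀ (by linarith) (by norm_num)]
    linarith
  rw [B_eq_taylor, norm_mul, norm_mc]
  norm_num only at hb
  have hb2 : ‖Complex.log (1 + z/((k:ℂ)+1)) - Complex.logTaylor 3 (z/((k:ℂ)+1))‖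
      ≤ ‖z/((k:ℂ)+1)‖^3 * 2 / 3 := by
    refine le_trans hb (div_le_div_of_nonneg_right
      (mul_le_mul_of_nonneg_left h2 (by positivity)) (by norm_num))
  calc ((k:ℝ)+1) * ‖Complex.log (1 + z/((k:ℂ)+1)) - Complex.logTaylor 3 (z/((k:ℂ)+1))‖
      ≤ ((k:ℝ)+1) * (‖z/((k:ℂ)+1)‖^3 * 2 / 3) :=
        mul_le_mul_of_nonneg_left hb2 (le_of_lt (kR_pos k))
    _ ≤ ‖z‖^3 * (1/((k:ℝ)+1)^2) := by
        rw [norm_u, div_pow]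
        have hp := kR_pos k
        have he : ((k:ℝ)+1) * (‖z‖^3/((k:ℝ)+1)^3 * 2 / 3) = ‖z‖^3/(((k:ℝ)+1)^2) * (2/3) := by
          field_simp
        rw [he, show ‖z‖^3*(1/((k:ℝ)+1)^2) = ‖z‖^3/(((k:ℝ)+1)^2) by ring]
        have hpos : (0:ℝ) ≤ ‖z‖^3/(((k:ℝ)+1)^2) := by positivity
        nlinarith

lemma summable_B (z : ℂ) : Summable (fun k => B k z) := by
  obtain ⟨N, hN⟩ := exists_nat_ge (2*‖z‖)
  apply summable_of_tail_bound _ (‖z‖^3) N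
  intro k hk
  exact tail_bound_B (le_trans hN (by exact_mod_cast Nat.cast_le.mpr hk))

lemma summable_A (z : ℂ) : Summable (fun k => A k z) :=
  (summable_B z).add (summable_B (-z))

lemma summable_fd {z₀ : ℂ} (h0 : z₀.re = 0) : Summable (fun k => fd k z₀) := by
  apply Summable.of_norm
  have hs := summable_inv_sq.mul_left ((‖z₀‖+1/4) * (2*((‖z₀‖+1/4)+1)))
  refine hs.of_nonneg_of_le (fun k => norm_nonneg _) (fun k => ?_)
  simpa [mul_assoc] using fd_bound h0 (Metric.mem_ball_self (by norm_num)) k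

lemma hasDerivAt_tsum_f {z₀ : ℂ} (h0 : z₀.re = 0) :
    HasDerivAt (fun z => ∑' k, f k z) (∑' k, fd k z₀) z₀ := by
  have hball : ∀ z ∈ Metric.ball z₀ (1/4:ℝ), -(1/2:ℝ) < z.re := by
    intro z hz
    have hd : ‖z - z₀‖ < 1/4 := by rw [Metric.mem_ball, Complex.dist_eq] at hz; exact hz
    have h1 : |z.re - z₀.re| ≤ ‖z - z₀‖ := by simpa using Complex.abs_re_le_norm (z - z₀)
    rw [h0, sub_zero] at h1
    have := abs_le.mp (le_of_lt (lt_of_le_of_lt h1 hd))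
    linarith [this.1]
  refine hasDerivAt_tsum_of_isPreconnected
    (summable_inv_sq.mul_left ((‖z₀‖+1/4) * (2*((‖z₀‖+1/4)+1))))
    Metric.isOpen_ball ((convex_ball z₀ (1/4:ℝ)).isPreconnected)
    (fun n y hy => hasDerivAt_f n (hball y hy))
    (fun n y hy => ?_) (Metric.mem_ball_self (by norm_num)) (summable_f z₀)
    (Metric.mem_ball_self (by norm_num))
  simpa [mul_assoc] using fd_bound h0 hy n

/-! ### Weierstrass product for Gamma -/

lemma weierstrass {z : ℂ} (h : -(1/2:ℝ) < z.re) :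
    Complex.Gamma (1+z) = Complex.exp (-(γ:ℂ)*z + ∑' k, f k z) := by
  have claim : ∀ n : ℕ, 1 ≤ n →
      Complex.exp (-(γ:ℂ)*z + ∑ k ∈ Finset.range (n+1), f k z)
      = Complex.GammaSeq (1+z) n *
        (Complex.exp ((((harmonic (n+1) : ℝ) - γ - Real.log n : ℝ):ℂ) * z) *
          (((n:ℂ)+1)/(n:ℂ))) := by
    intro n hn
    have hn0 : (n:ℂ) ≠ 0 := Nat.cast_ne_zero.mpr (by omega)
    have hnR : (0:ℝ) < n := by exact_mod_cast Nat.pos_of_ne_zero (by omega)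
    set P := ∏ k ∈ Finset.range (n+1), (1+z/((k:ℂ)+1)) with hPdef
    have hP : P ≠ 0 := Finset.prod_ne_zero_iff.mpr (fun k _ => one_add_ne k h)
    have hharm : ∀ m : ℕ, ((harmonic m : ℝ) : ℂ) = ∑ k ∈ Finset.range m, ((k:ℂ)+1)⁻¹ := by
      intro m
      unfold harmonic
      push_cast
      rfl
    have hsum : ∑ k ∈ Finset.range (n+1), f k z
        = ((harmonic (n+1) : ℝ):ℂ) * z
          - ∑ k ∈ Finset.range (n+1), Complex.log (1+z/((k:ℂ)+1)) := by
      unfold f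
      rw [Finset.sum_sub_distrib, hharm]
      congr 1
      rw [Finset.sum_mul]
      refine Finset.sum_congr rfl fun k _ => ?_
      rw [inv_mul_eq_div]
    have hexpP : Complex.exp (∑ k ∈ Finset.range (n+1),
        Complex.log (1+z/((k:ℂ)+1))) = P := by
      rw [Complex.exp_sum]
      exact Finset.prod_congr rfl fun k _ => Complex.exp_log (one_add_ne k h)
    have hlhs : Complex.exp (-(γ:ℂ)*z + ∑ k ∈ Finset.range (n+1), f k z)
        = Complex.exp ((((harmonic (n+1) : ℝ):ℂ) - (γ:ℝ)) * z) * P⁻¹ := by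
      rw [hsum, show -(γ:ℂ)*z + (((harmonic (n+1) : ℝ):ℂ) * z
          - ∑ k ∈ Finset.range (n+1), Complex.log (1+z/((k:ℂ)+1)))
        = ((((harmonic (n+1) : ℝ):ℂ) - (γ:ℝ)) * z)
          + (- ∑ k ∈ Finset.range (n+1), Complex.log (1+z/((k:ℂ)+1))) by ring,
        Complex.exp_add, Complex.exp_neg, hexpP]
    have hpow : (n:ℂ)^((1:ℂ)+z) = (n:ℂ) * Complex.exp (z * ((Real.log n : ℝ):ℂ)) := by
      rw [Complex.cpow_def_of_ne_zero hn0,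
        show Complex.log (n:ℂ) = ((Real.log n : ℝ):ℂ) by
          rw [← Complex.ofReal_natCast, Complex.ofReal_log (Nat.cast_nonneg n)],
        show ((Real.log n:ℝ):ℂ) * (1+z) = ((Real.log n:ℝ):ℂ) + z*((Real.log n:ℝ):ℂ) by ring,
        Complex.exp_add]
      congr 1
      rw [← Complex.ofReal_exp, Real.exp_log hnR, Complex.ofReal_natCast]
    have hden : ∏ j ∈ Finset.range (n+1), ((1:ℂ)+z+(j:ℂ)) = ((Nat.factorial (n+1) : ℕ) : ℂ) * P := by
      have h1 : ∀ j ∈ Finset.range (n+1), ((1:ℂ)+z+(j:ℂ)) = ((j:ℂ)+1) * (1+z/((j:ℂ)+1)) := by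
        intro j _
        field_simp [mc_ne j]
        ring
      rw [Finset.prod_congr rfl h1, Finset.prod_mul_distrib]
      congr 1
      rw [show ((Nat.factorial (n+1) : ℕ):ℂ) = ((∏ x ∈ Finset.range (n+1), (x+1) : ℕ) : ℂ) by
        rw [Finset.prod_range_add_one_eq_factorial]]
      push_cast
      rfl
    have hGS : Complex.GammaSeq (1+z) n
        = (n:ℂ) * Complex.exp (z * ((Real.log n : ℝ):ℂ)) * ((Nat.factorial n : ℕ) : ℂ)
          / (((Nat.factorial (n+1) : ℕ):ℂ) * P) := by
      rw [Complex.GammaSeq, ← hden, ← hpow]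
    have hsplit : Complex.exp ((((harmonic (n+1) : ℝ) - γ - Real.log n : ℝ):ℂ) * z)
        = Complex.exp ((((harmonic (n+1) : ℝ):ℂ) - (γ:ℝ)) * z)
          * (Complex.exp (z * ((Real.log n : ℝ):ℂ)))⁻¹ := by
      rw [← Complex.exp_neg, ← Complex.exp_add]
      congr 1
      push_cast
      ring
    rw [hlhs, hGS, hsplit]
    have hfac : ((Nat.factorial (n+1) : ℕ):ℂ) = ((n:ℂ)+1) * ((Nat.factorial n : ℕ):ℂ) := by
      rw [Nat.factorial_succ]
      push_cast
      ring
    rw [hfac]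
    have hfacne : ((Nat.factorial n : ℕ):ℂ) ≠ 0 := Nat.cast_ne_zero.mpr (Nat.factorial_ne_zero n)
    have hn1 : ((n:ℂ)+1) ≠ 0 := mc_ne n
    field_simp [Complex.exp_ne_zero]
  -- limits
  have h1 : Tendsto (fun n => Complex.exp (-(γ:ℂ)*z + ∑ k ∈ Finset.range n, f k z)) atTop
      (𝓝 (Complex.exp (-(γ:ℂ)*z + ∑' k, f k z))) := by
    apply (Complex.continuous_exp.tendsto _).comp
    exact tendsto_const_nhds.add (summable_f z).hasSum.tendsto_sum_nat
  have h1' : Tendsto (fun n => Complex.exp (-(γ:ℂ)*z + ∑ k ∈ Finset.range (n+1), f k z)) atTop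
      (𝓝 (Complex.exp (-(γ:ℂ)*z + ∑' k, f k z))) := h1.comp (tendsto_add_atTop_nat 1)
  have heps : Tendsto (fun n : ℕ => ((harmonic (n+1) : ℝ) - γ - Real.log n)) atTop (𝓝 0) := by
    have hA : Tendsto (fun n : ℕ => ((harmonic (n+1) : ℝ) - Real.log ((n+1:ℕ)))) atTop (𝓝 γ) :=
      Real.tendsto_harmonic_sub_log.comp (tendsto_add_atTop_nat 1)
    have hB : Tendsto (fun n : ℕ => Real.log ((n+1:ℕ)) - Real.log n) atTop (𝓝 0) := by
      have hc : Tendsto (fun n : ℕ => 1 + 1/(n:ℝ)) atTop (𝓝 1) := by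
        have := tendsto_one_div_atTop_nhds_zero_nat (𝕜 := ℝ)
        simpa using tendsto_const_nhds.add this
      have hl : Tendsto (fun n : ℕ => Real.log (1 + 1/(n:ℝ))) atTop (𝓝 0) := by
        have := (Real.continuousAt_log (by norm_num : (1:ℝ) ≠ 0)).tendsto.comp hc
        simpa [Function.comp_def] using this
      apply hl.congr'
      filter_upwards [eventually_ge_atTop 1] with n hn
      have hnR : (0:ℝ) < n := by exact_mod_cast Nat.pos_of_ne_zero (by omega)
      rw [show (1:ℝ) + 1/(n:ℝ) = ((n:ℝ)+1)/(n:ℝ) by field_simp,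
        Real.log_div (by positivity) (by positivity)]
      push_cast
      ring
    have := hA.sub_const γ |>.add hB
    simp only [add_zero, sub_self] at this
    apply this.congr
    intro n
    push_cast
    ring
  have hexp1 : Tendsto (fun n : ℕ =>
      Complex.exp ((((harmonic (n+1) : ℝ) - γ - Real.log n : ℝ):ℂ) * z)) atTop (𝓝 1) := by
    have hc : Continuous (fun r : ℝ => Complex.exp ((r:ℂ) * z)) := by continuity
    have := (hc.tendsto 0).comp heps
    simpa only [Function.comp_def, Complex.ofReal_zero, zero_mul, Complex.exp_zero] using this
  have hfrac : Tendsto (fun n : ℕ => ((n:ℂ)+1)/(n:ℂ)) atTop (𝓝 1) := by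
    have hre : Tendsto (fun n : ℕ => ((n:ℝ)+1)/(n:ℝ)) atTop (𝓝 1) := by
      have h0 : Tendsto (fun n : ℕ => 1 + 1/(n:ℝ)) atTop (𝓝 1) := by
        have := tendsto_one_div_atTop_nhds_zero_nat (𝕜 := ℝ)
        simpa using tendsto_const_nhds.add this
      apply h0.congr'
      filter_upwards [eventually_ge_atTop 1] with n hn
      have hnR : (0:ℝ) < n := by exact_mod_cast Nat.pos_of_ne_zero (by omega)
      field_simp
    have := (Complex.continuous_ofReal.tendsto 1).comp hre
    simp only [Complex.ofReal_one] at this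
    apply this.congr
    intro n
    simp only [Function.comp_apply]
    push_cast
    ring
  have h2 : Tendsto (fun n : ℕ => Complex.GammaSeq (1+z) n *
      (Complex.exp ((((harmonic (n+1) : ℝ) - γ - Real.log n : ℝ):ℂ) * z) *
        (((n:ℂ)+1)/(n:ℂ)))) atTop (𝓝 (Complex.Gamma (1+z) * (1 * 1))) :=
    (Complex.GammaSeq_tendsto_Gamma (1+z)).mul (hexp1.mul hfrac)
  have heq : Complex.exp (-(γ:ℂ)*z + ∑' k, f k z) = Complex.Gamma (1+z) * (1 * 1) := by
    apply tendsto_nhds_unique ?_ h2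
    apply h1'.congr'
    filter_upwards [eventually_ge_atTop 1] with n hn
    exact claim n hn
  rw [heq]
  ring

/-! ### digamma formula -/

def psi (z : ℂ) : ℂ := -(γ:ℂ) + ∑' k, fd k z

lemma Gamma1_ne_zero {z : ℂ} (h : -(1/2:ℝ) < z.re) : Complex.Gamma (1+z) ≠ 0 := by
  rw [weierstrass h]
  exact Complex.exp_ne_zero _

lemma deriv_Gamma_eq {z₀ : ℂ} (h0 : z₀.re = 0) :
    deriv Complex.Gamma (1+z₀) = Complex.Gamma (1+z₀) * psi z₀ := by
  have h0' : -(1/2:ℝ) < z₀.re := by rw [h0]; norm_num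
  have hT := hasDerivAt_tsum_f h0
  have hlin : HasDerivAt (fun z : ℂ => -(γ:ℂ)*z + ∑' k, f k z)
      (-(γ:ℂ) + ∑' k, fd k z₀) z₀ := by
    have h1 : HasDerivAt (fun z : ℂ => -(γ:ℂ)*z) (-(γ:ℂ)) z₀ := by
      simpa using (hasDerivAt_id z₀).const_mul (-(γ:ℂ))
    exact h1.add hT
  have hF : HasDerivAt (fun z => Complex.exp (-(γ:ℂ)*z + ∑' k, f k z))
      (Complex.exp (-(γ:ℂ)*z₀ + ∑' k, f k z₀) * (-(γ:ℂ) + ∑' k, fd k z₀)) z₀ := hlin.cexp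
  have hopen : IsOpen {z : ℂ | -(1/2:ℝ) < z.re} :=
    isOpen_lt continuous_const Complex.continuous_re
  have hev : (fun z => Complex.Gamma (1+z)) =ᶠ[𝓝 z₀]
      (fun z => Complex.exp (-(γ:ℂ)*z + ∑' k, f k z)) := by
    filter_upwards [hopen.mem_nhds h0'] with z hz using weierstrass hz
  have hG1 : HasDerivAt (fun z => Complex.Gamma (1+z))
      (Complex.exp (-(γ:ℂ)*z₀ + ∑' k, f k z₀) * (-(γ:ℂ) + ∑' k, fd k z₀)) z₀ :=
    hF.congr_of_eventuallyEq hev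
  have hpt : ((1:ℂ)+z₀) - 1 = z₀ := by ring
  have hG2 : HasDerivAt (fun z => Complex.Gamma (1+z))
      (Complex.exp (-(γ:ℂ)*z₀ + ∑' k, f k z₀) * (-(γ:ℂ) + ∑' k, fd k z₀))
      ((fun w : ℂ => w - 1) (1+z₀)) := by
    simpa [hpt] using hG1
  have hsh : HasDerivAt (fun w : ℂ => w - 1) 1 (1+z₀) := by
    simpa using (hasDerivAt_id ((1:ℂ)+z₀)).sub_const 1
  have hcomp := hG2.comp ((1:ℂ)+z₀) hsh
  have hfun : ((fun z => Complex.Gamma (1+z)) ∘ (fun w : ℂ => w - 1)) = Complex.Gamma := by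
    funext w
    simp only [Function.comp_apply]
    congr 1
    ring
  rw [hfun] at hcomp
  rw [hcomp.deriv, weierstrass h0', psi]
  ring

lemma psi_div {z₀ : ℂ} (h0 : z₀.re = 0) :
    deriv Complex.Gamma (1+z₀) / Complex.Gamma (1+z₀) = psi z₀ := by
  have h0' : -(1/2:ℝ) < z₀.re := by rw [h0]; norm_num
  rw [deriv_Gamma_eq h0]
  field_simp [Gamma1_ne_zero h0']

/-! ### derivative of the Barnes series -/

def Ad (k : ℕ) (z : ℂ) : ℂ := -2*z^3/(((k:ℂ)+1)*(((k:ℂ)+1)^2 - z^2))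

lemma re_one_add' (k : ℕ) {z : ℂ} (hz : z.re = 0) : ((1:ℂ) + z/((k:ℂ)+1)).re = 1 := by
  simp [re_div, hz]

lemma re_one_sub' (k : ℕ) {z : ℂ} (hz : z.re = 0) : ((1:ℂ) - z/((k:ℂ)+1)).re = 1 := by
  have : (1:ℂ) - z/((k:ℂ)+1) = 1 + (-z)/((k:ℂ)+1) := by ring
  rw [this, re_one_add' k (by simp [hz])]

lemma slit_add (k : ℕ) {z : ℂ} (hz : z.re = 0) :
    ((1:ℂ) + z/((k:ℂ)+1)) ∈ Complex.slitPlane :=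
  Complex.mem_slitPlane_iff.mpr (Or.inl (by rw [re_one_add' k hz]; norm_num))

lemma slit_sub (k : ℕ) {z : ℂ} (hz : z.re = 0) :
    ((1:ℂ) - z/((k:ℂ)+1)) ∈ Complex.slitPlane :=
  Complex.mem_slitPlane_iff.mpr (Or.inl (by rw [re_one_sub' k hz]; norm_num))

lemma msub_ne (k : ℕ) {z : ℂ} (hz : z.re = 0) : ((k:ℂ)+1) - z ≠ 0 := by
  intro hc
  have := congrArg Complex.re hc
  simp [hz] at this
  nlinarith [Nat.cast_nonneg (α := ℝ) k]

lemma madd_ne' (k : ℕ) {z : ℂ} (hz : z.re = 0) : ((k:ℂ)+1) + z ≠ 0 :=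
  madd_ne k (by rw [hz]; norm_num)

lemma msq_ne (k : ℕ) {z : ℂ} (hz : z.re = 0) : ((k:ℂ)+1)^2 - z^2 ≠ 0 := by
  have h : ((k:ℂ)+1)^2 - z^2 = (((k:ℂ)+1) + z) * (((k:ℂ)+1) - z) := by ring
  rw [h]
  exact mul_ne_zero (madd_ne' k hz) (msub_ne k hz)

lemma hasDerivAt_A (k : ℕ) {z : ℂ} (hz : z.re = 0) : HasDerivAt (A k) (Ad k z) z := by
  have hAfun : A k = (fun w : ℂ => w^2/((k:ℂ)+1) +
      ((k:ℂ)+1) * (Complex.log (1 + w/((k:ℂ)+1)) + Complex.log (1 - w/((k:ℂ)+1)))) :=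
    funext fun w => A_eq k w
  rw [hAfun]
  have h1 : HasDerivAt (fun w : ℂ => w^2/((k:ℂ)+1)) (2*z/((k:ℂ)+1)) z := by
    simpa using (hasDerivAt_pow 2 z).div_const ((k:ℂ)+1)
  have hd : HasDerivAt (fun w : ℂ => 1 + w/((k:ℂ)+1)) (1/((k:ℂ)+1)) z := by
    simpa using ((hasDerivAt_id z).div_const ((k:ℂ)+1)).const_add 1
  have hd2 : HasDerivAt (fun w : ℂ => 1 - w/((k:ℂ)+1)) (-(1/((k:ℂ)+1))) z := by
    simpa using ((hasDerivAt_id z).div_const ((k:ℂ)+1)).const_sub 1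
  have h2 := hd.clog (slit_add k hz)
  have h3 := hd2.clog (slit_sub k hz)
  have htot := h1.add ((h2.add h3).const_mul ((k:ℂ)+1))
  refine htot.congr_deriv (Eq.symm ?_)
  rw [Ad]
  have hne1 : (1:ℂ) + z/((k:ℂ)+1) ≠ 0 := Complex.slitPlane_ne_zero (slit_add k hz)
  have hne2 : (1:ℂ) - z/((k:ℂ)+1) ≠ 0 := Complex.slitPlane_ne_zero (slit_sub k hz)
  have e1 : 1/((k:ℂ)+1)/(1+z/((k:ℂ)+1)) = 1/(((k:ℂ)+1)+z) := by
    rw [div_div]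
    congr 1
    field_simp [mc_ne k]
  have e2 : -(1/((k:ℂ)+1))/(1-z/((k:ℂ)+1)) = -(1/(((k:ℂ)+1)-z)) := by
    rw [neg_div, div_div]
    congr 2
    field_simp [mc_ne k]
  rw [e1, e2]
  have e3 : 1/(((k:ℂ)+1)+z) + -(1/(((k:ℂ)+1)-z)) = -2*z/(((k:ℂ)+1)^2 - z^2) := by
    rw [show -(1/(((k:ℂ)+1)-z)) = (-1)/(((k:ℂ)+1)-z) by rw [neg_div],
      div_add_div _ _ (madd_ne' k hz) (msub_ne k hz),
      show (((k:ℂ)+1)+z)*(((k:ℂ)+1)-z) = ((k:ℂ)+1)^2 - z^2 by ring]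
    congr 1
    ring
  rw [e3, show ((k:ℂ)+1) * (-2*z/(((k:ℂ)+1)^2 - z^2))
      = (((k:ℂ)+1) * (-2*z))/(((k:ℂ)+1)^2 - z^2) by ring,
    div_add_div _ _ (mc_ne k) (msq_ne k hz)]
  congr 1
  ring

lemma normsq_lower (k : ℕ) {z : ℂ} (hz : z.re = 0) :
    ((k:ℝ)+1)^2 ≤ ‖((k:ℂ)+1)^2 - z^2‖ := by
  have hre : ((((k:ℂ)+1)^2 - z^2)).re = ((k:ℝ)+1)^2 + z.im^2 := by
    simp [pow_two, Complex.mul_re, Complex.sub_re, hz]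
  have := Complex.re_le_norm (((k:ℂ)+1)^2 - z^2)
  rw [hre] at this
  nlinarith [sq_nonneg z.im]

lemma Ad_bound (k : ℕ) {z : ℂ} (hz : z.re = 0) :
    ‖Ad k z‖ ≤ 2*‖z‖^3*(1/((k:ℝ)+1)^3) := by
  rw [Ad, norm_div]
  have hnum : ‖(-2*z^3 : ℂ)‖ = 2*‖z‖^3 := by
    rw [show (-2*z^3 : ℂ) = -(2*z^3) by ring, norm_neg, norm_mul, norm_pow]
    norm_num
  have hden' : ‖(((k:ℂ)+1)*(((k:ℂ)+1)^2 - z^2))‖ = ((k:ℝ)+1)*‖(((k:ℂ)+1)^2 - z^2)‖ := by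
    rw [norm_mul, norm_mc]
  rw [hnum, hden']
  have hden : ((k:ℝ)+1)*((k:ℝ)+1)^2 ≤ ((k:ℝ)+1)*‖((k:ℂ)+1)^2 - z^2‖ :=
    mul_le_mul_of_nonneg_left (normsq_lower k hz) (le_of_lt (kR_pos k))
  calc 2*‖z‖^3 / (((k:ℝ)+1)*‖((k:ℂ)+1)^2 - z^2‖)
      ≤ 2*‖z‖^3 / (((k:ℝ)+1)*((k:ℝ)+1)^2) := by
        apply div_le_div_of_nonneg_left (by positivity) (by positivity) hden
    _ = 2*‖z‖^3*(1/((k:ℝ)+1)^3) := by ring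

lemma summable_Ad {z : ℂ} (hz : z.re = 0) : Summable (fun k => Ad k z) := by
  apply Summable.of_norm
  exact (summable_inv_cube.mul_left (2*‖z‖^3)).of_nonneg_of_le
    (fun k => norm_nonneg _) (fun k => by simpa [mul_assoc] using Ad_bound k hz)

section sigmabeta

variable {σ β : ℂ}

lemma zre (hσ : σ.re = 0) (hβ : β.re = 0) (t : ℝ) : (σ + (t:ℂ)*β).re = 0 := by
  simp [Complex.add_re, Complex.mul_re, hσ, hβ]

lemma znorm {t : ℝ} (ht : t ∈ Set.Ioo (-1:ℝ) 2) : ‖σ + (t:ℂ)*β‖ ≤ ‖σ‖ + 2*‖β‖ := by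
  have habs : |t| ≤ 2 := abs_le.mpr ⟨by linarith [ht.1], le_of_lt ht.2⟩
  calc ‖σ + (t:ℂ)*β‖ ≤ ‖σ‖ + ‖(t:ℂ)*β‖ := norm_add_le _ _
    _ = ‖σ‖ + |t| * ‖β‖ := by rw [norm_mul, Complex.norm_real, Real.norm_eq_abs]
    _ ≤ ‖σ‖ + 2*‖β‖ := add_le_add_right
        (mul_le_mul_of_nonneg_right habs (norm_nonneg β)) _

lemma hasDerivAt_g (hσ : σ.re = 0) (hβ : β.re = 0) (k : ℕ) (t : ℝ) :
    HasDerivAt (fun s : ℝ => A k (σ + (s:ℂ)*β)) (Ad k (σ + (t:ℂ)*β) * β) t := by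
  have haff : HasDerivAt (fun w : ℂ => σ + w*β) β (t:ℂ) := by
    simpa using ((hasDerivAt_id ((t:ℂ))).mul_const β).const_add σ
  have hA := hasDerivAt_A k (zre hσ hβ t)
  have hcomp := hA.comp ((t:ℂ)) haff
  have := hcomp.comp_ofReal
  simpa [Function.comp] using this

lemma gd_bound (hσ : σ.re = 0) (hβ : β.re = 0) {t : ℝ}
    (ht : t ∈ Set.Ioo (-1:ℝ) 2) (k : ℕ) :
    ‖Ad k (σ + (t:ℂ)*β) * β‖ ≤ (2*(‖σ‖+2*‖β‖)^3*‖β‖) * (1/((k:ℝ)+1)^3) := by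
  rw [norm_mul]
  have h1 := Ad_bound k (zre hσ hβ t)
  have h2 : ‖σ + (t:ℂ)*β‖ ≤ ‖σ‖+2*‖β‖ := znorm ht
  calc ‖Ad k (σ+(t:ℂ)*β)‖*‖β‖
      ≤ (2*‖σ+(t:ℂ)*β‖^3*(1/((k:ℝ)+1)^3))*‖β‖ :=
        mul_le_mul_of_nonneg_right h1 (norm_nonneg β)
    _ ≤ (2*(‖σ‖+2*‖β‖)^3*(1/((k:ℝ)+1)^3))*‖β‖ := by gcongr
    _ = (2*(‖σ‖+2*‖β‖)^3*‖β‖) * (1/((k:ℝ)+1)^3) := by ring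

lemma hasDerivAt_tsum_A (hσ : σ.re = 0) (hβ : β.re = 0) {t : ℝ}
    (ht : t ∈ Set.Ioo (-1:ℝ) 2) :
    HasDerivAt (fun s : ℝ => ∑' k, A k (σ + (s:ℂ)*β))
      (∑' k, Ad k (σ + (t:ℂ)*β) * β) t :=
  hasDerivAt_tsum_of_isPreconnected
    (summable_inv_cube.mul_left (2*(‖σ‖+2*‖β‖)^3*‖β‖))
    isOpen_Ioo isPreconnected_Ioo (fun n y _ => hasDerivAt_g hσ hβ n y)
    (fun n y hy => gd_bound hσ hβ hy n)
    (show (0:ℝ) ∈ Set.Ioo (-1:ℝ) 2 by norm_num)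
    (by simpa using summable_A σ) ht

lemma integrand_eq (hσ : σ.re = 0) (hβ : β.re = 0) (t : ℝ) :
    (σ + (t:ℂ) * β) * β *
      (deriv Complex.Gamma (1 + σ + (t:ℂ) * β) / Complex.Gamma (1 + σ + (t:ℂ) * β) +
        deriv Complex.Gamma (1 - σ - (t:ℂ) * β) / Complex.Gamma (1 - σ - (t:ℂ) * β))
    = -2*(γ:ℂ)*(σ + (t:ℂ)*β)*β + ∑' k, Ad k (σ + (t:ℂ)*β) * β := by
  have hz : (σ + (t:ℂ)*β).re = 0 := zre hσ hβ t
  set z := σ + (t:ℂ)*β with hzdef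
  have hz' : (-z).re = 0 := by simp [hz]
  have e1 : (1:ℂ) + σ + (t:ℂ)*β = 1 + z := by rw [hzdef]; ring
  have e2 : (1:ℂ) - σ - (t:ℂ)*β = 1 + -z := by rw [hzdef]; ring
  rw [e1, e2, psi_div hz, psi_div hz', psi, psi]
  have hfd1 := summable_fd hz
  have hfd2 := summable_fd hz'
  have hterm : ∀ k : ℕ, z*β*(fd k z + fd k (-z)) = Ad k z * β := by
    intro k
    have hms : ((k:ℂ)+1) + -z ≠ 0 := by
      simpa [sub_eq_add_neg] using msub_ne k hz
    rw [fd, fd, Ad]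
    field_simp [mc_ne k, madd_ne' k hz, hms, msq_ne k hz]
    ring
  calc z*β*((-(γ:ℂ) + ∑' k, fd k z) + (-(γ:ℂ) + ∑' k, fd k (-z)))
      = -2*(γ:ℂ)*z*β + z*β*((∑' k, fd k z) + (∑' k, fd k (-z))) := by ring
    _ = -2*(γ:ℂ)*z*β + ∑' k, Ad k z * β := by
        rw [← Summable.tsum_add hfd1 hfd2, ← tsum_mul_left]
        congr 1
        exact tsum_congr hterm

end sigmabeta

/-! ### Barnes product identity -/

lemma tprod_eq_exp_tsum_B {v : ℂ} (hv : v.re = 0) :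
    (∏' k : ℕ, ((1 + v / (k + 1)) ^ (k + 1) * Complex.exp (v ^ 2 / (2 * (k + 1)) - v)))
      = Complex.exp (∑' k, B k v) := by
  have h2 := (summable_B v).hasSum.cexp
  have hfun : (Complex.exp ∘ fun k => B k v) = fun k : ℕ =>
      ((1 + v / (k + 1)) ^ (k + 1) * Complex.exp (v ^ 2 / (2 * (k + 1)) - v)) := by
    funext k
    simp only [Function.comp_apply, B]
    rw [show ((k:ℂ)+1) * Complex.log (1 + v/((k:ℂ)+1)) + v^2/(2*((k:ℂ)+1)) - v
        = ((k:ℂ)+1) * Complex.log (1 + v/((k:ℂ)+1)) + (v^2/(2*((k:ℂ)+1)) - v) by ring,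
      Complex.exp_add]
    congr 1
    rw [show ((k:ℂ)+1) * Complex.log (1 + v/((k:ℂ)+1))
        = ((k+1:ℕ):ℂ) * Complex.log (1 + v/((k:ℂ)+1)) by push_cast; ring,
      Complex.exp_nat_mul, Complex.exp_log (Complex.slitPlane_ne_zero (slit_add k hv))]
  rw [← hfun]
  exact h2.tprod_eq

lemma barnes_pair {w : ℂ} (hw : w.re = 0) :
    barnesG1 w * barnesG1 (-w)
      = Complex.exp (-(1+(γ:ℂ))*w^2 + ∑' k, A k w) := by
  have hw' : (-w).re = 0 := by simp [hw]
  rw [barnesG1, barnesG1, tprod_eq_exp_tsum_B hw, tprod_eq_exp_tsum_B hw']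
  have h2pi : (2 * Real.pi : ℂ) ≠ 0 := by
    simp [Real.pi_ne_zero]
  rw [Complex.cpow_def_of_ne_zero h2pi, Complex.cpow_def_of_ne_zero h2pi]
  simp only [← Complex.exp_add]
  congr 1
  have hA : ∑' k, A k w = (∑' k, B k w) + (∑' k, B k (-w)) := by
    rw [← Summable.tsum_add (summable_B w) (summable_B (-w))]
    rfl
  rw [hA]
  ring
end
end BG


theorem exp_integral_eq_barnesG_ratio (σ β : ℂ) (hσ : σ.re = 0) (hβ : β.re = 0) :
    Complex.exp (∫ t in (0 : ℝ)..1,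
        (σ + ↑t * β) * β *
          (deriv Complex.Gamma (1 + σ + ↑t * β) / Complex.Gamma (1 + σ + ↑t * β) +
            deriv Complex.Gamma (1 - σ - ↑t * β) / Complex.Gamma (1 - σ - ↑t * β)))
      = Complex.exp (β ^ 2 + 2 * β * σ) *
          (barnesG1 (σ + β) * barnesG1 (-σ - β)) / (barnesG1 σ * barnesG1 (-σ)) := by
  simp_rw [BG.integrand_eq hσ hβ]
  have hIoo : ∀ t : ℝ, t ∈ Set.uIcc (0:ℝ) 1 → t ∈ Set.Ioo (-1:ℝ) 2 := by
    intro t ht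
    rw [Set.uIcc_of_le (by norm_num : (0:ℝ) ≤ 1)] at ht
    exact ⟨by linarith [ht.1], by linarith [ht.2]⟩
  have hderiv : ∀ t ∈ Set.uIcc (0:ℝ) 1,
      HasDerivAt (fun s : ℝ => -(Real.eulerMascheroniConstant:ℂ)*(σ+(s:ℂ)*β)^2
        + ∑' k, BG.A k (σ+(s:ℂ)*β))
        (-2*(Real.eulerMascheroniConstant:ℂ)*(σ + (t:ℂ)*β)*β
          + ∑' k, BG.Ad k (σ + (t:ℂ)*β) * β) t := by
    intro t ht
    have haff : HasDerivAt (fun w : ℂ => σ + w*β) β ((t:ℝ):ℂ) := by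
      simpa using ((hasDerivAt_id (((t:ℝ)):ℂ)).mul_const β).const_add σ
    have h1c : HasDerivAt (fun w : ℂ => -(Real.eulerMascheroniConstant:ℂ)*(σ+w*β)^2)
        (-(Real.eulerMascheroniConstant:ℂ)*((2:ℕ)*(σ+((t:ℝ):ℂ)*β)^1*β)) ((t:ℝ):ℂ) :=
      (haff.pow 2).const_mul (-(Real.eulerMascheroniConstant:ℂ))
    have h1 := h1c.comp_ofReal
    have h2 := BG.hasDerivAt_tsum_A hσ hβ (hIoo t ht)
    have htot := h1.add h2
    refine htot.congr_deriv (Eq.symm ?_)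
    push_cast
    ring
  have hcont : ContinuousOn (fun t : ℝ =>
      -2*(Real.eulerMascheroniConstant:ℂ)*(σ + (t:ℂ)*β)*β
        + ∑' k, BG.Ad k (σ + (t:ℂ)*β) * β) (Set.uIcc (0:ℝ) 1) := by
    apply ContinuousOn.add
    · apply Continuous.continuousOn
      continuity
    · refine continuousOn_tsum (α := ℕ) (f := fun (k:ℕ) (t:ℝ) => BG.Ad k (σ + (t:ℂ)*β) * β)
        (u := fun k => (2*(‖σ‖+2*‖β‖)^3*‖β‖) * (1/((k:ℝ)+1)^3)) ?_ ?_ ?_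
      · intro k
        apply ContinuousOn.mul ?_ continuousOn_const
        simp only [BG.Ad]
        apply ContinuousOn.div
        · apply Continuous.continuousOn
          continuity
        · apply Continuous.continuousOn
          continuity
        · intro t _
          exact mul_ne_zero (BG.mc_ne k) (BG.msq_ne k (BG.zre hσ hβ t))
      · exact BG.summable_inv_cube.mul_left _
      · intro k t ht
        exact BG.gd_bound hσ hβ (hIoo t ht) k
  have hFTC := intervalIntegral.integral_eq_sub_of_hasDerivAt hderiv
    hcont.intervalIntegrable
  rw [hFTC]
  simp only [Complex.ofReal_one, Complex.ofReal_zero, one_mul, zero_mul, add_zero]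
  have hb1 : barnesG1 (σ+β) * barnesG1 (-σ-β)
      = Complex.exp (-(1+(Real.eulerMascheroniConstant:ℂ))*(σ+β)^2
          + ∑' k, BG.A k (σ+β)) := by
    rw [show -σ-β = -(σ+β) by ring]
    exact BG.barnes_pair (by simp [Complex.add_re, hσ, hβ])
  have hb0 : barnesG1 σ * barnesG1 (-σ)
      = Complex.exp (-(1+(Real.eulerMascheroniConstant:ℂ))*σ^2 + ∑' k, BG.A k σ) :=
    BG.barnes_pair hσ
  rw [hb1, hb0, div_eq_mul_inv, ← Complex.exp_neg, ← Complex.exp_add, ← Complex.exp_add]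
  congr 1
  ring
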